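/- arXiv:2412.08399 — 2 statements merged into one kernel-verified Lean document; each statement's English description precedes it below -/
import Mathlib

section
/- With a_n = ⌊ωn⌋ and b_n = ⌊ω²n⌋ for ω = (1+√5)/2, the set of difference pairs {(a_{n+1} - a_n, b_{n+1} - b_n) : n ≥ 1} equals {(1,2), (2,3)}. -/
/-- The golden ratio `(1 + √5)/2`. -/
noncomputable def goldenRatio' : ℝ := (1 + Real.sqrt 5) / 2

/-!
Since `1 < φ < 2`, consecutive terms of `⌊φ n⌋` differ by `1` or `2`; since `φ² = φ + 1`,
`⌊φ² n⌋ = ⌊φ n⌋ + n`, so the second difference is always the first one plus `1`.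
Both values occur: `⌊φ⌋, ⌊2φ⌋, ⌊3φ⌋ = 1, 3, 4`.
-/

open Real goldenRatio

theorem goldenRatio'_eq_goldenRatio : goldenRatio' = φ := rfl

theorem Int.floor_add_sub_floor_eq_one_or_two {R : Type*} [Ring R] [LinearOrder R]
    [IsStrictOrderedRing R] [FloorRing R] {α : R} (h₁ : 1 ≤ α) (h₂ : α < 2) (y : R) :
    ⌊y + α⌋ - ⌊y⌋ = 1 ∨ ⌊y + α⌋ - ⌊y⌋ = 2 := by
  have hα : ⌊α⌋ = 1 := Int.floor_eq_iff.mpr ⟨by exact_mod_cast h₁, by norm_num [h₂]⟩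
  have := Int.le_floor_add y α
  have := Int.le_floor_add_floor y α
  omega

namespace Real

theorem floor_goldenRatio_mul_succ_sub_eq_one_or_two (x : ℝ) :
    ⌊φ * (x + 1)⌋ - ⌊φ * x⌋ = 1 ∨ ⌊φ * (x + 1)⌋ - ⌊φ * x⌋ = 2 := by
  rw [mul_add_one]
  exact Int.floor_add_sub_floor_eq_one_or_two one_lt_goldenRatio.le goldenRatio_lt_two _

theorem floor_goldenRatio_sq_mul_natCast (n : ℕ) : ⌊φ ^ 2 * n⌋ = ⌊φ * n⌋ + n := by
  rw [goldenRatio_sq, add_one_mul, Int.floor_add_natCast]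

theorem floor_goldenRatio_sq_mul_succ_sub (n : ℕ) :
    ⌊φ ^ 2 * (n + 1)⌋ - ⌊φ ^ 2 * n⌋ = ⌊φ * (n + 1)⌋ - ⌊φ * n⌋ + 1 := by
  have := floor_goldenRatio_sq_mul_natCast (n + 1)
  push_cast at this
  rw [this, floor_goldenRatio_sq_mul_natCast]
  ring

theorem three_halves_lt_goldenRatio : 3 / 2 < φ := by
  have : 2 < √5 := by
    rw [show (2 : ℝ) = √(2 ^ 2) by simp]
    exact Real.sqrt_lt_sqrt (by norm_num) (by norm_num)
  unfold goldenRatio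
  linarith

theorem goldenRatio_lt_five_thirds : φ < 5 / 3 := by
  have : √5 < 7 / 3 := by
    rw [Real.sqrt_lt' (by norm_num)]
    norm_num
  unfold goldenRatio
  linarith

theorem floor_goldenRatio : ⌊φ⌋ = 1 :=
  Int.floor_eq_iff.mpr
    ⟨by exact_mod_cast one_lt_goldenRatio.le, by norm_num [goldenRatio_lt_two]⟩

theorem floor_two_mul_goldenRatio : ⌊φ * 2⌋ = 3 :=
  Int.floor_eq_iff.mpr
    ⟨by push_cast; linarith [three_halves_lt_goldenRatio],
     by push_cast; linarith [goldenRatio_lt_two]⟩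

theorem floor_three_mul_goldenRatio : ⌊φ * 3⌋ = 4 :=
  Int.floor_eq_iff.mpr
    ⟨by push_cast; linarith [three_halves_lt_goldenRatio],
     by push_cast; linarith [goldenRatio_lt_five_thirds]⟩

end Real

theorem stmt2 :
    {p : ℤ × ℤ | ∃ n : ℕ, 1 ≤ n ∧
      p = (⌊goldenRatio' * (n + 1)⌋ - ⌊goldenRatio' * n⌋,
           ⌊goldenRatio' ^ 2 * (n + 1)⌋ - ⌊goldenRatio' ^ 2 * n⌋)} =
    {((1 : ℤ), (2 : ℤ)), (2, 3)} := by
  ext p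
  simp only [goldenRatio'_eq_goldenRatio, floor_goldenRatio_sq_mul_succ_sub, Set.mem_ofPred_eq,
    Set.mem_insert_iff, Set.mem_singleton_iff]
  constructor
  · rintro ⟨n, -, rfl⟩
    rcases floor_goldenRatio_mul_succ_sub_eq_one_or_two n with h | h <;> simp [h]
  · rintro (rfl | rfl)
    · refine ⟨2, by norm_num, ?_⟩
      rw [Nat.cast_ofNat, two_add_one_eq_three, floor_two_mul_goldenRatio,
        floor_three_mul_goldenRatio]
      rfl
    · refine ⟨1, le_rfl, ?_⟩
      rw [Nat.cast_one, one_add_one_eq_two, mul_one, floor_goldenRatio, floor_two_mul_goldenRatio]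
      rfl
end

section
/- Define sequences by the recursive Mex algorithm: G_0 = {(0,0,0)}; given G_n, let F_n be the set of all coordinates of elements of G_n, D_n the set of all pairwise coordinate differences x_2 - x_1, x_3 - x_2, x_3 - x_1 over (x_1,x_2,x_3) ∈ G_n, v_1(n+1) = Mex(F_n), v_2(n+1) = Mex((v_1(n+1) + D_n) ∪ {1,...,v_1(n+1)} ∪ F_n), v_3(n+1) = Mex((v_2(n+1) + D_n) ∪ {1,...,v_2(n+1)} ∪ F_n), and G_{n+1} = G_n ∪ {(v_1(n+1), v_2(n+1), v_3(n+1))}. Then for every n ≥ 1 and every i ∈ {1,2,3}, v_i(n+1) - v_i(n) ≥ i. -/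
/-- Minimum excluded value of a set of natural numbers. -/
noncomputable def mex (S : Set ℕ) : ℕ := sInf {m : ℕ | m ∉ S}

/-- Coordinates of a set of triples. -/
def coords (G : Set (ℕ × ℕ × ℕ)) : Set ℕ :=
  {k | ∃ x ∈ G, k = x.1 ∨ k = x.2.1 ∨ k = x.2.2}

/-- Pairwise coordinate differences of a set of triples. -/
def diffs (G : Set (ℕ × ℕ × ℕ)) : Set ℕ :=
  {d | ∃ x ∈ G, d = x.2.1 - x.1 ∨ d = x.2.2 - x.2.1 ∨ d = x.2.2 - x.1}

/-- One step of the Mex algorithm: the next P-position. -/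
noncomputable def step (G : Set (ℕ × ℕ × ℕ)) : ℕ × ℕ × ℕ :=
  let F := coords G
  let D := diffs G
  let a := mex F
  let b := mex ((fun d => a + d) '' D ∪ Set.Icc 1 a ∪ F)
  let c := mex ((fun d => b + d) '' D ∪ Set.Icc 1 b ∪ F)
  (a, b, c)

/-- The sets `G_n` of P-positions computed by the Mex algorithm. -/
noncomputable def Gset : ℕ → Set (ℕ × ℕ × ℕ)
  | 0 => {(0, 0, 0)}
  | n + 1 => Gset n ∪ {step (Gset n)}

/-- The `n`-th P-position `(v_1(n), v_2(n), v_3(n))`. -/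
noncomputable def v : ℕ → ℕ × ℕ × ℕ
  | 0 => (0, 0, 0)
  | n + 1 => step (Gset n)

noncomputable def v1 (n : ℕ) : ℕ := (v n).1
noncomputable def v2 (n : ℕ) : ℕ := (v n).2.1
noncomputable def v3 (n : ℕ) : ℕ := (v n).2.2

/-- `F_n`: the set of coordinates of elements of `G_n`. -/
noncomputable def Fset (n : ℕ) : Set ℕ := coords (Gset n)

/-- `D_n`: the set of pairwise coordinate differences over `G_n`. -/
noncomputable def Dset (n : ℕ) : Set ℕ := diffs (Gset n)

/-! Write `A, B, C` for `v1, v2, v3` and `τ n = mex (Dset n)`. `A` grows because it is the mex of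
growing sets. `B (n+1) ≥ A (n+1) + τ n` and `C (n+1) ≥ B (n+1) + τ n`, so `B` and `C` grow by `2`
and `3` as soon as `B n - A n` and `C n - B n` are below `τ n`. This is kept by a strong induction
on three facts: `C (n+1) = B (n+1) + τ n`; the only gap of `Dset n` below `B (n+1) - A (n+1)` is
`τ n`; and no gap of `Dset n` is followed by two members. The second holds because each such gap
`e` makes `A (n+1) + e` a value of `C`, and these are `3` apart; the third because `C - A` grows by
at least `2` at each step, so the new differences never land next to the old ones. -/

section Mex

variable {S T : Set ℕ} {k : ℕ}

lemma mex_le (h : k ∉ S) : mex S ≤ k :=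
  Nat.sInf_le h

lemma mem_of_lt_mex (h : k < mex S) : k ∈ S :=
  not_not.1 (Nat.notMem_of_lt_sInf h)

lemma mex_notMem (hS : S.Finite) : mex S ∉ S :=
  Nat.sInf_mem (s := {m | m ∉ S}) hS.infinite_compl.nonempty

lemma le_mex (hS : S.Finite) (h : ∀ m < k, m ∈ S) : k ≤ mex S :=
  not_lt.1 fun hlt => mex_notMem hS (h _ hlt)

lemma mex_mono (hT : T.Finite) (h : S ⊆ T) : mex S ≤ mex T :=
  mex_le fun hm => mex_notMem hT (h hm)

lemma mex_lt_mex (hT : T.Finite) (h : S ⊆ T) (hS : mex S ∈ T) : mex S < mex T :=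
  (mex_mono hT h).lt_of_ne fun he => mex_notMem hT (he ▸ hS)

end Mex

lemma coords_finite {G : Set (ℕ × ℕ × ℕ)} (hG : G.Finite) : (coords G).Finite :=
  (hG.biUnion fun x _ => Set.toFinite {x.1, x.2.1, x.2.2}).subset
    fun _ ⟨x, hx, hk⟩ => Set.mem_biUnion hx (by simpa using hk)

lemma diffs_finite {G : Set (ℕ × ℕ × ℕ)} (hG : G.Finite) : (diffs G).Finite :=
  (hG.biUnion fun x _ => Set.toFinite {x.2.1 - x.1, x.2.2 - x.2.1, x.2.2 - x.1}).subset
    fun _ ⟨x, hx, hd⟩ => Set.mem_biUnion hx (by simpa using hd)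

lemma Gset_finite (n : ℕ) : (Gset n).Finite := by
  induction n with
  | zero => exact Set.finite_singleton _
  | succ n ih => exact ih.union (Set.finite_singleton _)

lemma Fset_finite (n : ℕ) : (Fset n).Finite := coords_finite (Gset_finite n)

lemma Dset_finite (n : ℕ) : (Dset n).Finite := diffs_finite (Gset_finite n)

def candidates (a : ℕ) (D F : Set ℕ) : Set ℕ :=
  (fun d => a + d) '' D ∪ Set.Icc 1 a ∪ F

section Candidates

variable {a : ℕ} {D F : Set ℕ}

lemma candidates_finite (hD : D.Finite) (hF : F.Finite) : (candidates a D F).Finite :=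
  ((hD.image _).union (Set.finite_Icc _ _)).union hF

lemma add_mex_le_mex_candidates (hD : D.Finite) (hF : F.Finite) (h0 : 0 ∈ F) :
    a + mex D ≤ mex (candidates a D F) := by
  refine le_mex (candidates_finite hD hF) fun m hm => ?_
  rcases Nat.eq_zero_or_pos m with rfl | hpos
  · exact Or.inr h0
  rcases le_or_gt m a with hle | hgt
  · exact Or.inl (Or.inr ⟨hpos, hle⟩)
  · exact Or.inl (Or.inl ⟨m - a, mem_of_lt_mex (by omega), show a + (m - a) = m by omega⟩)

end Candidates

lemma v1_succ (n : ℕ) : v1 (n + 1) = mex (Fset n) := rfl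

lemma v2_succ (n : ℕ) : v2 (n + 1) = mex (candidates (v1 (n + 1)) (Dset n) (Fset n)) := rfl

lemma v3_succ (n : ℕ) : v3 (n + 1) = mex (candidates (v2 (n + 1)) (Dset n) (Fset n)) := rfl

lemma mem_Gset {p : ℕ × ℕ × ℕ} {n : ℕ} : p ∈ Gset n ↔ ∃ k ≤ n, p = v k := by
  induction n with
  | zero => simp [Gset, v]
  | succ n ih =>
    simp only [Gset, Set.mem_union, ih, Set.mem_singleton_iff, Nat.le_succ_iff_eq_or_le]
    constructor
    · rintro (⟨k, hk, rfl⟩ | rfl)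
      exacts [⟨k, Or.inr hk, rfl⟩, ⟨n + 1, Or.inl rfl, rfl⟩]
    · rintro ⟨k, rfl | hk, rfl⟩
      exacts [Or.inr rfl, Or.inl ⟨k, hk, rfl⟩]

lemma mem_Fset {x n : ℕ} : x ∈ Fset n ↔ ∃ k ≤ n, x = v1 k ∨ x = v2 k ∨ x = v3 k := by
  simp only [Fset, coords, Set.mem_ofPred_eq, mem_Gset]
  exact ⟨fun ⟨_, ⟨k, hk, rfl⟩, h⟩ => ⟨k, hk, h⟩, fun ⟨k, hk, h⟩ => ⟨v k, ⟨k, hk, rfl⟩, h⟩⟩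

lemma mem_Dset {d n : ℕ} :
    d ∈ Dset n ↔ ∃ k ≤ n, d = v2 k - v1 k ∨ d = v3 k - v2 k ∨ d = v3 k - v1 k := by
  simp only [Dset, diffs, Set.mem_ofPred_eq, mem_Gset]
  exact ⟨fun ⟨_, ⟨k, hk, rfl⟩, h⟩ => ⟨k, hk, h⟩, fun ⟨k, hk, h⟩ => ⟨v k, ⟨k, hk, rfl⟩, h⟩⟩

lemma Gset_mono : Monotone Gset :=
  monotone_nat_of_le_succ fun _ => Set.subset_union_left

lemma Fset_mono : Monotone Fset :=
  fun _ _ h _ ⟨x, hx, hk⟩ => ⟨x, Gset_mono h hx, hk⟩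

lemma Dset_mono : Monotone Dset :=
  fun _ _ h _ ⟨x, hx, hd⟩ => ⟨x, Gset_mono h hx, hd⟩

lemma zero_mem_Fset (n : ℕ) : 0 ∈ Fset n := mem_Fset.2 ⟨0, n.zero_le, Or.inl rfl⟩

lemma zero_mem_Dset (n : ℕ) : 0 ∈ Dset n := mem_Dset.2 ⟨0, n.zero_le, Or.inl rfl⟩

lemma mem_Dset_zero {d : ℕ} : d ∈ Dset 0 ↔ d = 0 := by
  simp [mem_Dset, v1, v2, v3, v]

lemma mem_Dset_succ {d n : ℕ} : d ∈ Dset (n + 1) ↔ d ∈ Dset n ∨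
    d = v2 (n + 1) - v1 (n + 1) ∨ d = v3 (n + 1) - v2 (n + 1) ∨ d = v3 (n + 1) - v1 (n + 1) := by
  simp only [mem_Dset, Nat.le_succ_iff_eq_or_le, or_and_right, exists_or, exists_eq_left]
  exact or_comm

lemma zero_lt_mex_Dset (n : ℕ) : 0 < mex (Dset n) :=
  Nat.pos_of_ne_zero fun h => mex_notMem (Dset_finite n) (h ▸ zero_mem_Dset n)

lemma v1_strictMono : StrictMono v1 := by
  refine strictMono_nat_of_lt_succ fun n => lt_of_le_of_ne ?_ fun h =>
    mex_notMem (Fset_finite n) (v1_succ n ▸ h ▸ mem_Fset.2 ⟨n, le_rfl, Or.inl rfl⟩)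
  cases n with
  | zero => exact Nat.zero_le _
  | succ n => exact mex_mono (Fset_finite _) (Fset_mono n.le_succ)

lemma v1_lt_v2_succ (n : ℕ) : v1 (n + 1) < v2 (n + 1) :=
  (Nat.lt_add_of_pos_right (zero_lt_mex_Dset n)).trans_le
    (add_mex_le_mex_candidates (Dset_finite n) (Fset_finite n) (zero_mem_Fset n))

lemma v2_lt_v3_succ (n : ℕ) : v2 (n + 1) < v3 (n + 1) :=
  (Nat.lt_add_of_pos_right (zero_lt_mex_Dset n)).trans_le
    (add_mex_le_mex_candidates (Dset_finite n) (Fset_finite n) (zero_mem_Fset n))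

lemma v1_le_v2 : ∀ k, v1 k ≤ v2 k
  | 0 => le_rfl
  | k + 1 => (v1_lt_v2_succ k).le

lemma v2_le_v3 : ∀ k, v2 k ≤ v3 k
  | 0 => le_rfl
  | k + 1 => (v2_lt_v3_succ k).le

lemma mex_Dset_le_v2_sub_v1 (n : ℕ) : mex (Dset n) ≤ v2 (n + 1) - v1 (n + 1) := by
  refine mex_le fun h => mex_notMem
    (candidates_finite (a := v1 (n + 1)) (Dset_finite n) (Fset_finite n)) ?_
  have := v1_lt_v2_succ n
  exact Or.inl (Or.inl ⟨_, h, show v1 (n + 1) + (v2 (n + 1) - v1 (n + 1)) = v2 (n + 1) by omega⟩)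

lemma exists_le_v3_sub_v1_of_mem_Dset {d n : ℕ} (hd : d ∈ Dset n) :
    ∃ k ≤ n, d ≤ v3 k - v1 k := by
  obtain ⟨k, hk, hd⟩ := mem_Dset.1 hd
  have := v1_le_v2 k
  have := v2_le_v3 k
  exact ⟨k, hk, by omega⟩

lemma add_le_of_forall_lt_add_le_succ {f : ℕ → ℕ} {c n : ℕ}
    (hf : ∀ k < n, f k + c ≤ f (k + 1)) {j k : ℕ} (hjk : j < k) (hkn : k ≤ n) :
    f j + c ≤ f k := by
  induction k, hjk using Nat.le_induction with
  | base => exact hf j hkn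
  | succ k hjk ih =>
    have := hf k hkn
    have := ih (by omega)
    omega

def DiffsLtMex (n : ℕ) : Prop :=
  v2 n - v1 n < mex (Dset n) ∧ v3 n - v2 n < mex (Dset n)

lemma diffsLtMex_zero : DiffsLtMex 0 :=
  ⟨zero_lt_mex_Dset 0, zero_lt_mex_Dset 0⟩

namespace DiffsLtMex

variable {n : ℕ}

lemma v2_add_two_le (h : DiffsLtMex n) : v2 n + 2 ≤ v2 (n + 1) := by
  have hv2 := add_mex_le_mex_candidates (a := v1 (n + 1)) (Dset_finite n) (Fset_finite n)
    (zero_mem_Fset n)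
  have := v1_strictMono (Nat.lt_add_one n)
  have := v1_le_v2 n
  rw [← v2_succ] at hv2
  have := h.1
  omega

lemma v3_add_three_le (h : DiffsLtMex n) : v3 n + 3 ≤ v3 (n + 1) := by
  have hv3 := add_mex_le_mex_candidates (a := v2 (n + 1)) (Dset_finite n) (Fset_finite n)
    (zero_mem_Fset n)
  have := h.v2_add_two_le
  have := v2_le_v3 n
  rw [← v3_succ] at hv3
  have := h.2
  omega

end DiffsLtMex

section Step

variable {n : ℕ}

lemma v3_succ_eq_v2_succ_add_mex (hP : ∀ k ≤ n, DiffsLtMex k) :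
    v3 (n + 1) = v2 (n + 1) + mex (Dset n) := by
  have hfin := Dset_finite n
  have hv2 : ∀ k ≤ n, v2 k + 2 ≤ v2 (n + 1) := fun k hk =>
    add_le_of_forall_lt_add_le_succ (fun i hi => (hP i (by omega)).v2_add_two_le)
      (Nat.lt_add_one_of_le hk) le_rfl
  rw [v3_succ]
  refine le_antisymm (mex_le ?_) (add_mex_le_mex_candidates hfin (Fset_finite n) (zero_mem_Fset n))
  rintro ((⟨d, hd, hde⟩ | hIcc) | hF)
  · have hd' : d = mex (Dset n) := by simp only at hde; omega
    exact mex_notMem hfin (hd' ▸ hd)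
  · have := zero_lt_mex_Dset n
    exact absurd hIcc.2 (by omega)
  · obtain ⟨k, hk, hx | hx | hx⟩ := mem_Fset.1 hF
    · have := v1_le_v2 k
      have := hv2 k hk
      omega
    · have := hv2 k hk
      omega
    · have := hv2 k hk
      have := (hP k hk).2
      have := mex_mono hfin (Dset_mono hk)
      omega

lemma exists_v3_eq_of_notMem {e : ℕ} (hP : ∀ k ≤ n, DiffsLtMex k) (he : e ∉ Dset n)
    (hlt : v1 (n + 1) + e < v2 (n + 1)) : ∃ k ≤ n, v3 k = v1 (n + 1) + e := by
  have hmem : v1 (n + 1) + e ∈ candidates (v1 (n + 1)) (Dset n) (Fset n) := mem_of_lt_mex hlt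
  rcases hmem with ((⟨d, hd, hde⟩ | hIcc) | hF)
  · have hde' : d = e := by simp only at hde; omega
    exact absurd (hde' ▸ hd) he
  · obtain rfl : e = 0 := by have := hIcc.2; omega
    exact absurd (zero_mem_Dset n) he
  · obtain ⟨k, hk, hx | hx | hx⟩ := mem_Fset.1 hF
    · have := v1_strictMono (Nat.lt_add_one_of_le hk)
      have := v1_lt_v2_succ n
      omega
    · have := v1_strictMono (Nat.lt_add_one_of_le hk)
      have := (hP k hk).1
      have := mex_mono (Dset_finite n) (Dset_mono hk)
      exact absurd (mem_of_lt_mex (show e < mex (Dset n) by omega)) he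
    · exact ⟨k, hk, hx.symm⟩

end Step

def GapsWithinTwo (S : Set ℕ) : Prop :=
  ∀ m ∉ S, m + 1 ∉ S ∨ m + 2 ∉ S

lemma gapsWithinTwo_Dset_zero : GapsWithinTwo (Dset 0) := by
  intro m _
  simp [mem_Dset_zero]

/-- A gap `e` of `Dset n` below `v2 (n+1) - v1 (n+1)` puts `v1 (n+1) + e` among the `v3 k`, which
are at least `3` apart; since `GapsWithinTwo` provides a second gap within `2` of the first one,
`mex (Dset n)` is the only such gap. -/
lemma mem_or_eq_mex_of_lt {n : ℕ} (hP : ∀ k ≤ n, DiffsLtMex k) (hgap : GapsWithinTwo (Dset n))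
    {e : ℕ} (hlt : v1 (n + 1) + e < v2 (n + 1)) : e ∈ Dset n ∨ e = mex (Dset n) := by
  by_contra! ⟨he, hne⟩
  set t := mex (Dset n)
  have ht : t ∉ Dset n := mex_notMem (Dset_finite n)
  have hte : t < e := (mex_le he).lt_of_ne hne.symm
  obtain ⟨g, hg, htg, hge, hg2⟩ : ∃ g ∉ Dset n, t < g ∧ g ≤ e ∧ g ≤ t + 2 := by
    rcases hgap t ht with h | h
    · exact ⟨t + 1, h, by omega, by omega, by omega⟩
    · by_cases he1 : e = t + 1
      · exact ⟨e, he, by omega, le_rfl, by omega⟩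
      · exact ⟨t + 2, h, by omega, by omega, le_rfl⟩
  obtain ⟨k, hk, hkt⟩ := exists_v3_eq_of_notMem hP ht (by omega)
  obtain ⟨j, hj, hjg⟩ := exists_v3_eq_of_notMem hP hg (by omega)
  have hsep : ∀ {i l}, i < l → l ≤ n → v3 i + 3 ≤ v3 l :=
    add_le_of_forall_lt_add_le_succ fun i hi => (hP i hi.le).v3_add_three_le
  rcases lt_trichotomy k j with hkj | rfl | hjk
  · have := hsep hkj hj
    omega
  · omega
  · have := hsep hjk hk
    omega

structure StepInvariant (n : ℕ) : Prop where
  gapsWithinTwo : GapsWithinTwo (Dset n)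
  v3_eq : v3 (n + 1) = v2 (n + 1) + mex (Dset n)
  mem_or_eq_mex : ∀ e, v1 (n + 1) + e < v2 (n + 1) → e ∈ Dset n ∨ e = mex (Dset n)

namespace StepInvariant

variable {n : ℕ}

lemma mex_lt_mex_succ (h : StepInvariant n) : mex (Dset n) < mex (Dset (n + 1)) := by
  refine mex_lt_mex (Dset_finite _) (Dset_mono n.le_succ)
    (mem_Dset_succ.2 (Or.inr (Or.inr (Or.inl ?_))))
  rw [h.v3_eq]
  omega

lemma diffsLtMex_succ (h : StepInvariant n) : DiffsLtMex (n + 1) := by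
  have hAB := v1_lt_v2_succ n
  refine ⟨le_mex (Dset_finite _) fun m hm => ?_, ?_⟩
  · rcases Nat.lt_succ_iff_lt_or_eq.1 hm with hm | rfl
    · rcases h.mem_or_eq_mex m (by omega) with hD | rfl
      · exact Dset_mono n.le_succ hD
      · exact mem_Dset_succ.2 (Or.inr (Or.inr (Or.inl (by rw [h.v3_eq]; omega))))
    · exact mem_Dset_succ.2 (Or.inr (Or.inl rfl))
  · have := h.mex_lt_mex_succ
    rw [h.v3_eq]
    omega

lemma v3_sub_v1_add_two_le (h : StepInvariant n) (h' : StepInvariant (n + 1)) :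
    v3 (n + 1) - v1 (n + 1) + 2 ≤ v3 (n + 2) - v1 (n + 2) := by
  have := h.v3_eq
  have : v3 (n + 2) = v2 (n + 2) + mex (Dset (n + 1)) := h'.v3_eq
  have := h.mex_lt_mex_succ
  have := h.diffsLtMex_succ.1
  have : mex (Dset (n + 1)) ≤ v2 (n + 2) - v1 (n + 2) := mex_Dset_le_v2_sub_v1 (n + 1)
  have := v1_lt_v2_succ n
  have : v1 (n + 2) < v2 (n + 2) := v1_lt_v2_succ (n + 1)
  omega

/-- Above a gap of `Dset (n+1)` the only new difference can be `v3 (n+1) - v1 (n+1)`, since all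
numbers below the other two are in `Dset n` or equal `mex (Dset n)`; and `hmax` keeps it `2` away
from the old differences. -/
lemma gapsWithinTwo_succ (h : StepInvariant n)
    (hmax : ∀ d ∈ Dset n, d + 2 ≤ v3 (n + 1) - v1 (n + 1)) : GapsWithinTwo (Dset (n + 1)) := by
  intro m hm
  have hmD : m ∉ Dset n := fun h => hm (Dset_mono n.le_succ h)
  have hAB := v1_lt_v2_succ n
  have hmt : m ≠ mex (Dset n) := fun hmt =>
    hm (mem_Dset_succ.2 (Or.inr (Or.inr (Or.inl (by rw [h.v3_eq]; omega)))))
  have hbig : ∀ x, m < x → x ∈ Dset (n + 1) → x ∈ Dset n ∨ x = v3 (n + 1) - v1 (n + 1) := by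
    intro x hmx hx
    rcases mem_Dset_succ.1 hx with hx | rfl | rfl | rfl
    · exact Or.inl hx
    · exact absurd (h.mem_or_eq_mex m (by omega)) (by tauto)
    · exact absurd (mem_of_lt_mex (show m < mex (Dset n) by rw [h.v3_eq] at hmx; omega)) hmD
    · exact Or.inr rfl
  by_contra! ⟨h1, h2⟩
  rcases hbig _ (by omega) h1 with h1 | h1 <;> rcases hbig _ (by omega) h2 with h2 | h2
  · exact (h.gapsWithinTwo m hmD).elim (· h1) (· h2)
  · have := hmax _ h1
    omega
  · have := hmax _ h2
    omega
  · omega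

end StepInvariant

lemma add_two_le_of_mem_Dset {n d : ℕ} (h : ∀ k ≤ n, StepInvariant k) (hd : d ∈ Dset n) :
    d + 2 ≤ v3 (n + 1) - v1 (n + 1) := by
  obtain ⟨k, hk, hdk⟩ := exists_le_v3_sub_v1_of_mem_Dset hd
  have hγ : ∀ i < n + 1, v3 i - v1 i + 2 ≤ v3 (i + 1) - v1 (i + 1)
    | 0, _ => by
      have := v1_lt_v2_succ 0
      have := v2_lt_v3_succ 0
      have : v3 0 - v1 0 = 0 := rfl
      omega
    | i + 1, hi => (h i (by omega)).v3_sub_v1_add_two_le (h (i + 1) (by omega))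
  have := add_le_of_forall_lt_add_le_succ hγ (Nat.lt_add_one_of_le hk) le_rfl
  omega

lemma diffsLtMex_of_forall_lt {n : ℕ} (h : ∀ k < n, StepInvariant k) : DiffsLtMex n := by
  cases n with
  | zero => exact diffsLtMex_zero
  | succ n => exact (h n (Nat.lt_add_one n)).diffsLtMex_succ

lemma stepInvariant (n : ℕ) : StepInvariant n := by
  induction n using Nat.strong_induction_on with
  | _ n ih =>
    have hP : ∀ k ≤ n, DiffsLtMex k := fun k hk =>
      diffsLtMex_of_forall_lt fun j hj => ih j (by omega)
    have hgap : GapsWithinTwo (Dset n) := by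
      cases n with
      | zero => exact gapsWithinTwo_Dset_zero
      | succ n =>
        exact (ih n (Nat.lt_add_one n)).gapsWithinTwo_succ fun d hd =>
          add_two_le_of_mem_Dset (fun k hk => ih k (by omega)) hd
    exact ⟨hgap, v3_succ_eq_v2_succ_add_mex hP, fun e => mem_or_eq_mex_of_lt hP hgap⟩

theorem stmt3 : ∀ n : ℕ, 1 ≤ n →
    v1 n + 1 ≤ v1 (n + 1) ∧ v2 n + 2 ≤ v2 (n + 1) ∧ v3 n + 3 ≤ v3 (n + 1) := by
  intro n _
  have h : DiffsLtMex n := diffsLtMex_of_forall_lt fun k _ => stepInvariant k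
  exact ⟨v1_strictMono (Nat.lt_add_one n), h.v2_add_two_le, h.v3_add_three_le⟩
end
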